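/- Let A be a graded-commutative ℚ-algebra and E = Λ(ι_1,...,ι_s) an exterior algebra on degree-1 generators. Suppose φ : A → E ⊗ A is an algebra homomorphism with (ε ⊗ id) ∘ φ = id, where ε : E → ℚ is the augmentation. If A is finite-dimensional over ℚ and has no nonzero derivations of negative degree, then φ(u) = 1 ⊗ u for all u ∈ A. -/

import Mathlib

/-!
Write `φ a = ∑_I ι_I · j (λ_I a)`, where `λ_I = coeff I ∘ φ`; then `λ_∅ = id` and `λ_I` lowers
degrees by `|I|`. Since `ι_P ι_Q` is `±ι_{P ∪ Q}` or `0`, comparing `ι_I`-coordinates in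
`φ (u v) = φ u * φ v` shows: once `λ_J = 0` for every nonempty `J ⊊ I`, only the pairs `(∅, I)` and
`(I, ∅)` contribute, so `λ_I` is a graded derivation of degree `-|I|`, hence zero. Strong
induction on `I` kills every `λ_I` with `I ≠ ∅`, leaving `φ = j`.
-/

structure GradedDerivation (R : Type*) [Ring R] [Algebra ℚ R]
    (𝒜 : ℤ → Submodule ℚ R) (d : ℤ) where
  toLin : R →ₗ[ℚ] R
  mem_of_mem : ∀ (n : ℤ) (u : R), u ∈ 𝒜 n → toLin u ∈ 𝒜 (n + d)
  leibniz : ∀ (m n : ℤ) (u v : R), u ∈ 𝒜 m → v ∈ 𝒜 n →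
    toLin (u * v) = toLin u * v + ((-1 : ℚ) ^ (d * m)) • (u * toLin v)

def IsGradedComm (R : Type*) [Ring R] [Algebra ℚ R] (𝒜 : ℤ → Submodule ℚ R) : Prop :=
  ∀ (m n : ℤ) (u v : R), u ∈ 𝒜 m → v ∈ 𝒜 n → u * v = ((-1 : ℚ) ^ (m * n)) • (v * u)

def NoNegativeDerivations (R : Type*) [Ring R] [Algebra ℚ R] (𝒜 : ℤ → Submodule ℚ R) : Prop :=
  ∀ d : ℤ, d < 0 → ∀ D : GradedDerivation R 𝒜 d, D.toLin = 0
/-- The ordered product `ι_I = ι_{i₁} ⋯ ι_{i_k}` for `I = {i₁ < … < i_k}`. -/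
def orderedProd {B : Type*} [Ring B] {s : ℕ} (ι : Fin s → B) (I : Finset (Fin s)) : B :=
  ((I.sort (· ≤ ·)).map ι).prod

section OrderedProd

variable {B : Type*} [Ring B] {s : ℕ} (ι : Fin s → B)

@[simp]
lemma orderedProd_empty : orderedProd ι ∅ = 1 := by
  simp [orderedProd]

lemma orderedProd_mem {σ : Type*} [SetLike σ B] [AddSubmonoidClass σ B] (ℬ : ℤ → σ)
    [SetLike.GradedMonoid ℬ] (hι : ∀ i, ι i ∈ ℬ 1) (I : Finset (Fin s)) :
    orderedProd ι I ∈ ℬ I.card := by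
  have h := SetLike.list_prod_map_mem_graded (I.sort (· ≤ ·)) (fun _ => (1 : ℤ)) ι
    fun i _ => hι i
  simpa [orderedProd] using h

variable {ι}

lemma List.Perm.prod_map_eq_or_eq_neg (hanti : ∀ a b, ι a * ι b = -(ι b * ι a))
    {l₁ l₂ : List (Fin s)} (h : l₁.Perm l₂) :
    (l₁.map ι).prod = (l₂.map ι).prod ∨ (l₁.map ι).prod = -(l₂.map ι).prod := by
  induction h with
  | nil => exact Or.inl rfl
  | cons x _ ih =>
    simp only [List.map_cons, List.prod_cons]
    rcases ih with h | h <;> simp [h]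
  | swap x y l =>
    simp only [List.map_cons, List.prod_cons, ← mul_assoc]
    exact Or.inr (by rw [hanti y x, neg_mul])
  | trans _ _ ih₁ ih₂ =>
    rcases ih₁ with h₁ | h₁ <;> rcases ih₂ with h₂ | h₂ <;> simp [h₁, h₂]

lemma prod_map_eq_zero_of_not_nodup (hanti : ∀ a b, ι a * ι b = -(ι b * ι a))
    (hsq : ∀ a, ι a * ι a = 0) {l : List (Fin s)} (h : ¬ l.Nodup) : (l.map ι).prod = 0 := by
  obtain ⟨a, ha⟩ : ∃ a, 1 < l.count a := by
    simpa [List.nodup_iff_count_le_one] using h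
  have hmem : a ∈ l := List.count_pos_iff.mp (by omega)
  have hmem' : a ∈ l.erase a := List.count_pos_iff.mp (by rw [List.count_erase_self]; omega)
  have hperm : l.Perm (a :: a :: (l.erase a).erase a) :=
    (List.perm_cons_erase hmem).trans ((List.perm_cons_erase hmem').cons a)
  have hzero : ((a :: a :: (l.erase a).erase a).map ι).prod = 0 := by
    simp only [List.map_cons, List.prod_cons, ← mul_assoc, hsq, zero_mul]
  rcases hperm.prod_map_eq_or_eq_neg hanti with h | h <;> simp only [h, hzero, neg_zero]

lemma orderedProd_mul_orderedProd_of_not_disjoint (hanti : ∀ a b, ι a * ι b = -(ι b * ι a))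
    (hsq : ∀ a, ι a * ι a = 0) {I J : Finset (Fin s)} (h : ¬ Disjoint I J) :
    orderedProd ι I * orderedProd ι J = 0 := by
  rw [orderedProd, orderedProd, ← List.prod_append, ← List.map_append]
  refine prod_map_eq_zero_of_not_nodup hanti hsq fun hnd => h ?_
  rw [Finset.disjoint_left]
  intro a haI haJ
  exact List.disjoint_of_nodup_append hnd ((Finset.mem_sort _).mpr haI)
    ((Finset.mem_sort _).mpr haJ)

lemma orderedProd_mul_orderedProd_of_disjoint (hanti : ∀ a b, ι a * ι b = -(ι b * ι a))
    {I J : Finset (Fin s)} (h : Disjoint I J) :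
    orderedProd ι I * orderedProd ι J = orderedProd ι (I ∪ J) ∨
      orderedProd ι I * orderedProd ι J = -orderedProd ι (I ∪ J) := by
  rw [orderedProd, orderedProd, orderedProd, ← List.prod_append, ← List.map_append]
  refine List.Perm.prod_map_eq_or_eq_neg hanti ?_
  rw [← Multiset.coe_eq_coe, ← Multiset.coe_add, Finset.sort_eq, Finset.sort_eq,
    Finset.sort_eq, ← Finset.disjUnion_eq_union I J h]
  rfl

end OrderedProd

section GradedComm

variable {B : Type*} [Ring B] [Algebra ℚ B] {ℬ : ℤ → Submodule ℚ B}

lemma IsGradedComm.mul_eq_neg_mul_of_mem_one (hc : IsGradedComm B ℬ) {x y : B}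
    (hx : x ∈ ℬ 1) (hy : y ∈ ℬ 1) : x * y = -(y * x) := by
  simpa using hc 1 1 x y hx hy

lemma IsGradedComm.mul_self_eq_zero_of_mem_one (hc : IsGradedComm B ℬ) {x : B}
    (hx : x ∈ ℬ 1) : x * x = 0 := by
  have h : (2 : ℚ) • (x * x) = 0 := by
    rw [two_smul, add_eq_zero_iff_eq_neg]
    exact hc.mul_eq_neg_mul_of_mem_one hx hx
  simpa using h

end GradedComm

section Coordinates

variable {A B : Type*} [Ring A] [Algebra ℚ A] [Ring B] [Algebra ℚ B] {s : ℕ}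
  (ι : Fin s → B) (j : A →ₐ[ℚ] B)

def monomialSum : (Finset (Fin s) → A) →ₗ[ℚ] B where
  toFun c := ∑ I, orderedProd ι I * j (c I)
  map_add' c d := by simp [mul_add, Finset.sum_add_distrib]
  map_smul' q c := by simp [Finset.smul_sum]

lemma monomialSum_apply (c : Finset (Fin s) → A) :
    monomialSum ι j c = ∑ I, orderedProd ι I * j (c I) := rfl

lemma monomialSum_single (I : Finset (Fin s)) (x : A) :
    monomialSum ι j (Pi.single I x) = orderedProd ι I * j x := by
  rw [monomialSum_apply, Finset.sum_eq_single I (fun J _ hJ => by simp [hJ]) (by simp)]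
  simp

variable {ι j}

noncomputable def coeff (hfree : Function.Bijective (monomialSum ι j)) (K : Finset (Fin s)) :
    B →ₗ[ℚ] A :=
  LinearMap.proj K ∘ₗ (LinearEquiv.ofBijective _ hfree).symm.toLinearMap

variable (hfree : Function.Bijective (monomialSum ι j))

lemma monomialSum_coeff (b : B) : monomialSum ι j (fun K => coeff hfree K b) = b :=
  (LinearEquiv.ofBijective _ hfree).apply_symm_apply b

lemma coeff_monomialSum (c : Finset (Fin s) → A) (K : Finset (Fin s)) :
    coeff hfree K (monomialSum ι j c) = c K :=
  congrFun ((LinearEquiv.ofBijective _ hfree).symm_apply_apply c) K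

lemma coeff_orderedProd_mul (I K : Finset (Fin s)) (x : A) :
    coeff hfree K (orderedProd ι I * j x) = if I = K then x else 0 := by
  rw [← monomialSum_single, coeff_monomialSum, Pi.single_apply]
  simp [eq_comm]

end Coordinates

section Grading

variable {A B : Type*} [Ring A] [Algebra ℚ A] [Ring B] [Algebra ℚ B]
  {𝒜 : ℤ → Submodule ℚ A} {ℬ : ℤ → Submodule ℚ B} {s : ℕ} {ι : Fin s → B} {j : A →ₐ[ℚ] B}

lemma decompose_monomialSum [GradedRing 𝒜] [GradedRing ℬ] (hι : ∀ i, ι i ∈ ℬ 1)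
    (hj : ∀ (n : ℤ) (a : A), a ∈ 𝒜 n → j a ∈ ℬ n) (c : Finset (Fin s) → A) (n : ℤ) :
    (DirectSum.decompose ℬ (monomialSum ι j c) n : B) =
      monomialSum ι j (fun I => (DirectSum.decompose 𝒜 (c I) (n - I.card) : A)) := by
  let jg : 𝒜 →+*ᵍ ℬ := ⟨j.toRingHom, fun hx => hj _ _ hx⟩
  simp only [monomialSum_apply, DirectSum.decompose_sum, DirectSum.sum_apply, Submodule.coe_sum]
  refine Finset.sum_congr rfl fun I _ => ?_
  have h := DirectSum.coe_decompose_mul_add_of_left_mem ℬ (b := j (c I)) (j := n - I.card)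
    (orderedProd_mem ι ℬ hι I)
  rw [add_sub_cancel] at h
  rw [h]
  exact congrArg _ (jg.map_directSumDecompose (x := c I)).symm

lemma coeff_mem_of_mem [GradedRing 𝒜] [GradedRing ℬ] (hι : ∀ i, ι i ∈ ℬ 1)
    (hj : ∀ (n : ℤ) (a : A), a ∈ 𝒜 n → j a ∈ ℬ n)
    (hfree : Function.Bijective (monomialSum ι j)) {b : B} {n : ℤ} (hb : b ∈ ℬ n)
    (K : Finset (Fin s)) : coeff hfree K b ∈ 𝒜 (n - K.card) := by
  have hb' : b = monomialSum ι j
      (fun I => (DirectSum.decompose 𝒜 (coeff hfree I b) (n - I.card) : A)) := by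
    calc b = DirectSum.decompose ℬ b n := (DirectSum.decompose_of_mem_same ℬ hb).symm
      _ = DirectSum.decompose ℬ (monomialSum ι j (fun I => coeff hfree I b)) n := by
        rw [monomialSum_coeff]
      _ = _ := decompose_monomialSum hι hj _ n
  have hK := congrArg (coeff hfree K) hb'
  rw [coeff_monomialSum] at hK
  exact hK ▸ SetLike.coe_mem _

lemma monomial_mul_monomial [SetLike.GradedMonoid ℬ] (hc : IsGradedComm B ℬ) (hι : ∀ i, ι i ∈ ℬ 1)
    (hj : ∀ (n : ℤ) (a : A), a ∈ 𝒜 n → j a ∈ ℬ n) {x : A} {p : ℤ} (hx : x ∈ 𝒜 p)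
    (I J : Finset (Fin s)) (y : A) :
    orderedProd ι I * j x * (orderedProd ι J * j y) =
      ((-1 : ℚ) ^ (p * J.card)) • (orderedProd ι I * orderedProd ι J * j (x * y)) := by
  have h := hc p J.card (j x) (orderedProd ι J) (hj p x hx) (orderedProd_mem ι ℬ hι J)
  calc orderedProd ι I * j x * (orderedProd ι J * j y)
      = orderedProd ι I * (j x * orderedProd ι J) * j y := by simp only [mul_assoc]
    _ = _ := by
      rw [h, map_mul]
      simp only [smul_mul_assoc, mul_smul_comm, mul_assoc]

lemma coeff_monomial_mul_monomial_eq_zero [SetLike.GradedMonoid ℬ] (hc : IsGradedComm B ℬ)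
    (hι : ∀ i, ι i ∈ ℬ 1) (hj : ∀ (n : ℤ) (a : A), a ∈ 𝒜 n → j a ∈ ℬ n)
    (hfree : Function.Bijective (monomialSum ι j)) {x : A} {p : ℤ} (hx : x ∈ 𝒜 p)
    {I J K : Finset (Fin s)} (hIJK : ¬ (Disjoint I J ∧ I ∪ J = K)) (y : A) :
    coeff hfree K (orderedProd ι I * j x * (orderedProd ι J * j y)) = 0 := by
  have hanti : ∀ a b, ι a * ι b = -(ι b * ι a) :=
    fun a b => hc.mul_eq_neg_mul_of_mem_one (hι a) (hι b)
  suffices coeff hfree K (orderedProd ι I * orderedProd ι J * j (x * y)) = 0 by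
    rw [monomial_mul_monomial hc hι hj hx, map_smul, this, smul_zero]
  by_cases hd : Disjoint I J
  · have hK : I ∪ J ≠ K := fun h => hIJK ⟨hd, h⟩
    rcases orderedProd_mul_orderedProd_of_disjoint hanti hd with h | h <;>
      simp only [h, neg_mul, map_neg, coeff_orderedProd_mul, if_neg hK, neg_zero]
  · have hsq : ∀ a, ι a * ι a = 0 := fun a => hc.mul_self_eq_zero_of_mem_one (hι a)
    rw [orderedProd_mul_orderedProd_of_not_disjoint hanti hsq hd, zero_mul, map_zero]

end Grading

lemma neg_one_zpow_neg_mul_comm (k m : ℤ) : (-1 : ℚ) ^ (-k * m) = (-1 : ℚ) ^ (m * k) := by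
  rw [neg_mul, zpow_neg, mul_comm]
  rcases Int.even_or_odd (m * k) with h | h <;> simp [h.neg_one_zpow]

section CoordinatesOfHom

variable {A B : Type*} [Ring A] [Algebra ℚ A] [Ring B] [Algebra ℚ B]
  {𝒜 : ℤ → Submodule ℚ A} {ℬ : ℤ → Submodule ℚ B} [GradedRing 𝒜] [GradedRing ℬ]
  {s : ℕ} {ι : Fin s → B} {j : A →ₐ[ℚ] B} {φ : A →ₐ[ℚ] B}

lemma coeff_map_mul (hc : IsGradedComm B ℬ) (hι : ∀ i, ι i ∈ ℬ 1)
    (hj : ∀ (n : ℤ) (a : A), a ∈ 𝒜 n → j a ∈ ℬ n) (hfree : Function.Bijective (monomialSum ι j))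
    (hφdeg : ∀ (n : ℤ) (a : A), a ∈ 𝒜 n → φ a ∈ ℬ n) (hφ₀ : ∀ a, coeff hfree ∅ (φ a) = a)
    {I : Finset (Fin s)} (hI : I.Nonempty)
    (hsub : ∀ J ⊂ I, J.Nonempty → ∀ a, coeff hfree J (φ a) = 0)
    {m : ℤ} {u : A} (hu : u ∈ 𝒜 m) (v : A) :
    coeff hfree I (φ (u * v)) = coeff hfree I (φ u) * v +
      ((-1 : ℚ) ^ (-(I.card : ℤ) * m)) • (u * coeff hfree I (φ v)) := by
  set term : Finset (Fin s) × Finset (Fin s) → B := fun p =>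
    orderedProd ι p.1 * j (coeff hfree p.1 (φ u)) * (orderedProd ι p.2 * j (coeff hfree p.2 (φ v)))
  have hexpand : φ (u * v) = ∑ p, term p := by
    rw [map_mul, ← monomialSum_coeff hfree (φ u), ← monomialSum_coeff hfree (φ v),
      monomialSum_apply, monomialSum_apply, Finset.sum_mul_sum, ← Fintype.sum_prod_type']
  have hne : ((∅ : Finset (Fin s)), I) ≠ (I, ∅) := fun h => hI.ne_empty (Prod.ext_iff.mp h).2
  have hvanish : ∀ p, p ≠ (∅, I) ∧ p ≠ (I, ∅) → coeff hfree I (term p) = 0 := by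
    rintro ⟨P, Q⟩ ⟨hP, hQ⟩
    by_cases hPQ : Disjoint P Q ∧ P ∪ Q = I
    · obtain ⟨hdisj, hunion⟩ := hPQ
      have hPne : P.Nonempty :=
        Finset.nonempty_iff_ne_empty.mpr fun h => hP (by simp [h, ← hunion])
      obtain ⟨x, hx⟩ : Q.Nonempty :=
        Finset.nonempty_iff_ne_empty.mpr fun h => hQ (by simp [h, ← hunion])
      have hPI : P ⊂ I := by
        rw [← hunion]
        exact left_lt_sup.mpr fun hQP => Finset.disjoint_left.mp hdisj (hQP hx) hx
      simp [term, hsub P hPI hPne u]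
    · exact coeff_monomial_mul_monomial_eq_zero hc hι hj hfree
        (coeff_mem_of_mem hι hj hfree (hφdeg m u hu) P) hPQ _
  have hleft : coeff hfree I (term (∅, I)) =
      ((-1 : ℚ) ^ (m * I.card)) • (u * coeff hfree I (φ v)) := by
    simp only [term, hφ₀]
    rw [monomial_mul_monomial hc hι hj hu, map_smul, orderedProd_empty, one_mul,
      coeff_orderedProd_mul, if_pos rfl]
  have hright : coeff hfree I (term (I, ∅)) = coeff hfree I (φ u) * v := by
    simp only [term, hφ₀]
    rw [orderedProd_empty, one_mul, mul_assoc, ← map_mul, coeff_orderedProd_mul, if_pos rfl]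
  rw [hexpand, map_sum, Fintype.sum_eq_add _ _ hne hvanish, hleft, hright,
    neg_one_zpow_neg_mul_comm, add_comm]

noncomputable def coeffDerivation (hc : IsGradedComm B ℬ) (hι : ∀ i, ι i ∈ ℬ 1)
    (hj : ∀ (n : ℤ) (a : A), a ∈ 𝒜 n → j a ∈ ℬ n) (hfree : Function.Bijective (monomialSum ι j))
    (hφdeg : ∀ (n : ℤ) (a : A), a ∈ 𝒜 n → φ a ∈ ℬ n) (hφ₀ : ∀ a, coeff hfree ∅ (φ a) = a)
    {I : Finset (Fin s)} (hI : I.Nonempty)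
    (hsub : ∀ J ⊂ I, J.Nonempty → ∀ a, coeff hfree J (φ a) = 0) :
    GradedDerivation A 𝒜 (-I.card) where
  toLin := coeff hfree I ∘ₗ φ.toLinearMap
  mem_of_mem n u hu := by
    simpa [sub_eq_add_neg] using coeff_mem_of_mem hι hj hfree (hφdeg n u hu) I
  leibniz _ _ _ v hu _ := coeff_map_mul hc hι hj hfree hφdeg hφ₀ hI hsub hu v

lemma coeff_map_eq_zero (hno : NoNegativeDerivations A 𝒜) (hc : IsGradedComm B ℬ)
    (hι : ∀ i, ι i ∈ ℬ 1) (hj : ∀ (n : ℤ) (a : A), a ∈ 𝒜 n → j a ∈ ℬ n)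
    (hfree : Function.Bijective (monomialSum ι j))
    (hφdeg : ∀ (n : ℤ) (a : A), a ∈ 𝒜 n → φ a ∈ ℬ n) (hφ₀ : ∀ a, coeff hfree ∅ (φ a) = a)
    (I : Finset (Fin s)) (hI : I.Nonempty) (a : A) : coeff hfree I (φ a) = 0 := by
  induction I using Finset.strongInduction generalizing a with
  | H I ih =>
    have hdeg : -(I.card : ℤ) < 0 := by simpa using hI.card_pos
    exact LinearMap.congr_fun
      (hno _ hdeg (coeffDerivation hc hι hj hfree hφdeg hφ₀ hI ih)) a

end CoordinatesOfHom

theorem stmt8_general (A B : Type*) [Ring A] [Algebra ℚ A] [Ring B] [Algebra ℚ B]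
    (𝒜 : ℤ → Submodule ℚ A) (ℬ : ℤ → Submodule ℚ B) [GradedRing 𝒜] [GradedRing ℬ]
    (hcB : IsGradedComm B ℬ)
    (hno : NoNegativeDerivations A 𝒜)
    (s : ℕ) (ι : Fin s → B) (hι : ∀ i, ι i ∈ ℬ 1)
    (j : A →ₐ[ℚ] B) (hj : ∀ (n : ℤ) (a : A), a ∈ 𝒜 n → j a ∈ ℬ n)
    (hfree : Function.Bijective fun c : Finset (Fin s) → A =>
      ∑ I : Finset (Fin s), orderedProd ι I * j (c I))
    (φ : A →ₐ[ℚ] B) (hφdeg : ∀ (n : ℤ) (a : A), a ∈ 𝒜 n → φ a ∈ ℬ n)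
    (hφ : ∀ a : A, ∃ c : Finset (Fin s) → A,
      (φ a = ∑ I : Finset (Fin s), orderedProd ι I * j (c I)) ∧ c ∅ = a) :
    ∀ u : A, φ u = j u := by
  have hbij : Function.Bijective (monomialSum ι j) := hfree
  have hφ₀ : ∀ a, coeff hbij ∅ (φ a) = a := fun a => by
    obtain ⟨c, hc, hc₀⟩ := hφ a
    rw [show φ a = monomialSum ι j c from hc, coeff_monomialSum, hc₀]
  intro u
  have hcoeff : (fun K => coeff hbij K (φ u)) = Pi.single ∅ u := funext fun K => by
    rcases K.eq_empty_or_nonempty with rfl | hK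
    · rw [hφ₀, Pi.single_eq_same]
    · rw [coeff_map_eq_zero hno hcB hι hj hbij hφdeg hφ₀ K hK,
        Pi.single_eq_of_ne hK.ne_empty]
  calc φ u = monomialSum ι j (fun K => coeff hbij K (φ u)) := (monomialSum_coeff hbij _).symm
    _ = j u := by rw [hcoeff, monomialSum_single, orderedProd_empty, one_mul]

/-- let `A` be a finite-dimensional graded-commutative ℚ-algebra with no nonzero
negative-degree derivations, and let `B` be a model of the graded tensor product `E ⊗ A`, where
`E = Λ(ι₁,…,ι_s)` is exterior on degree-1 generators: `B` is graded-commutative, `j : A → B`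
(`u ↦ 1 ⊗ u`) is a degree-preserving algebra map, `ι i ∈ B¹`, and every element of `B` is
uniquely `Σ_I ι_I·j(a_I)`. If `φ : A → B` is a degree-preserving algebra homomorphism with
`(ε ⊗ id) ∘ φ = id` (i.e. the `∅`-coordinate of `φ(a)` is `a`), then `φ(u) = 1 ⊗ u`, i.e.
`φ = j`. -/
theorem stmt8 (A B : Type*) [Ring A] [Algebra ℚ A] [Ring B] [Algebra ℚ B]
    (𝒜 : ℤ → Submodule ℚ A) (ℬ : ℤ → Submodule ℚ B) [GradedRing 𝒜] [GradedRing ℬ]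
    (hcA : IsGradedComm A 𝒜) (hcB : IsGradedComm B ℬ)
    [FiniteDimensional ℚ A] (hno : NoNegativeDerivations A 𝒜)
    (s : ℕ) (ι : Fin s → B) (hι : ∀ i, ι i ∈ ℬ 1)
    (j : A →ₐ[ℚ] B) (hj : ∀ (n : ℤ) (a : A), a ∈ 𝒜 n → j a ∈ ℬ n)
    (hfree : Function.Bijective fun c : Finset (Fin s) → A =>
      ∑ I : Finset (Fin s), orderedProd ι I * j (c I))
    (φ : A →ₐ[ℚ] B) (hφdeg : ∀ (n : ℤ) (a : A), a ∈ 𝒜 n → φ a ∈ ℬ n)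
    (hφ : ∀ a : A, ∃ c : Finset (Fin s) → A,
      (φ a = ∑ I : Finset (Fin s), orderedProd ι I * j (c I)) ∧ c ∅ = a) :
    ∀ u : A, φ u = j u :=
  stmt8_general A B 𝒜 ℬ hcB hno s ι hι j hj hfree φ hφdeg hφ
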